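/- Let C̃ = diag(c̃₁,c̃₂,c̃₃) with each c̃ᵢ > 0, let c₀ = max{c̃₁,c̃₂,c̃₃}, let W̃ be a real 3×3 matrix, λ a nonzero real constant, g : ℝ³ → ℝ³ continuous, and let x, x̃ : [0,∞) → ℝ³ be continuous. Let y and ỹ solve y' = -C̃y + W̃f(y) + λg(x(t)) and ỹ' = -C̃ỹ + W̃f(ỹ) + λg(x̃(t)) respectively on an interval [η - τ/2, η + τ/2] with τ > 0, where f(y) = (tanh(y₁), tanh(y₂), tanh(y₃))ᵀ. If ‖∫_{η-τ/2}^{η+τ/2} (g(x(s)) - g(x̃(s))) ds‖ ≥ Lτε/(2√3) for some constants L > 0 and ε > 0, then max_{t ∈ [η-τ/2, η+τ/2]} ‖y(t) - ỹ(t)‖ ≥ L|λ|τε / (2√3·[2 + (c₀ + ‖W̃‖)τ]). -/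

import Mathlib

open Real

noncomputable section

local notation "E" => EuclideanSpace ℝ (Fin 3)

/-- The spectral (ℓ²-operator) norm of a real 3×3 matrix. -/
def specNorm (A : Matrix (Fin 3) (Fin 3) ℝ) : ℝ :=
  ‖Matrix.toEuclideanCLM (𝕜 := ℝ) A‖

/-- The response HNN vector field `-C̃ y + W̃ f(y) + λ g(xv)`, with `C̃ = diagonal ct`. -/
def respField (ct : Fin 3 → ℝ) (Wt : Matrix (Fin 3) (Fin 3) ℝ) (lam : ℝ) (g : E → E)
    (xv y : E) : E :=
  WithLp.toLp 2 (fun i => -(ct i * y i) + (∑ j, Wt i j * Real.tanh (y j)) + lam * g xv i)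

lemma tanh_hasDerivAt (x : ℝ) : HasDerivAt Real.tanh (1 / Real.cosh x ^ 2) x := by
  have hco : Real.cosh x ≠ 0 := (Real.cosh_pos x).ne'
  have h := (Real.hasDerivAt_sinh x).div (Real.hasDerivAt_cosh x) hco
  have e : (Real.cosh x * Real.cosh x - Real.sinh x * Real.sinh x) / Real.cosh x ^ 2
      = 1 / Real.cosh x ^ 2 := by
    rw [show Real.cosh x * Real.cosh x - Real.sinh x * Real.sinh x
        = Real.cosh x ^ 2 - Real.sinh x ^ 2 by ring, Real.cosh_sq_sub_sinh_sq]
  rw [e] at h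
  rw [show Real.tanh = Real.sinh / Real.cosh from funext fun y => Real.tanh_eq_sinh_div_cosh y]
  exact h

lemma continuous_tanh' : Continuous Real.tanh := by
  have : Real.tanh = fun x => Real.sinh x / Real.cosh x :=
    funext fun x => Real.tanh_eq_sinh_div_cosh x
  rw [this]
  exact Real.continuous_sinh.div Real.continuous_cosh fun x => (Real.cosh_pos x).ne'

lemma tanh_lip (a b : ℝ) : |Real.tanh a - Real.tanh b| ≤ |a - b| := by
  have key := Convex.norm_image_sub_le_of_norm_hasDerivWithin_le
    (f := Real.tanh) (f' := fun x => 1 / Real.cosh x ^ 2) (C := 1)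
    (fun x _ => (tanh_hasDerivAt x).hasDerivWithinAt)
    (fun x _ => by
      rw [Real.norm_eq_abs, abs_div, abs_one, div_le_one (by positivity),
        abs_of_nonneg (by positivity)]
      nlinarith [Real.one_le_cosh x])
    convex_univ (Set.mem_univ b) (Set.mem_univ a)
  simpa using key

/-- coordinatewise abs bound implies norm bound on `E`. -/
lemma enorm_mono (u v : E) (h : ∀ i, |u i| ≤ |v i|) : ‖u‖ ≤ ‖v‖ := by
  rw [EuclideanSpace.norm_eq, EuclideanSpace.norm_eq]
  apply Real.sqrt_le_sqrt
  apply Finset.sum_le_sum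
  intro i _
  simp only [Real.norm_eq_abs]
  exact pow_le_pow_left₀ (abs_nonneg _) (h i) 2

/-- The canonical identification of `Fin 3 → ℝ` with `E`. -/
def ed : (Fin 3 → ℝ) → EuclideanSpace ℝ (Fin 3) := (WithLp.equiv 2 (Fin 3 → ℝ)).symm

@[simp] lemma ed_apply (u : Fin 3 → ℝ) (i : Fin 3) : ed u i = u i := rfl

lemma matrix_apply_eq (Wt : Matrix (Fin 3) (Fin 3) ℝ) (u : Fin 3 → ℝ) :
    Matrix.toEuclideanCLM (𝕜 := ℝ) Wt (ed u) = ed (fun i => ∑ j, Wt i j * u j) :=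
  rfl

/-- coordinatewise continuity gives continuity into `E`. -/
lemma contOn_E {f : ℝ → E} {s : Set ℝ}
    (h : ∀ i, ContinuousOn (fun t => f t i) s) : ContinuousOn f s := by
  have h1 : ContinuousOn ((WithLp.equiv 2 (Fin 3 → ℝ)) ∘ f) s := continuousOn_pi.2 h
  exact (PiLp.continuous_toLp (p := 2) (β := fun _ : Fin 3 => ℝ)).comp_continuousOn h1

/-- Let `y` and `ỹ` solve the response network driven by `x` and `x̃`
respectively on the interval `[η - τ/2, η + τ/2]`.  If
`‖∫_{η-τ/2}^{η+τ/2} (g(x(s)) - g(x̃(s))) ds‖ ≥ Lτε/(2√3)`, then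
`max_{t ∈ [η-τ/2, η+τ/2]} ‖y(t) - ỹ(t)‖ ≥ L|λ|τε / (2√3 (2 + (c₀ + ‖W̃‖)τ))`. -/
theorem max_separation_lower_bound
    (ct : Fin 3 → ℝ) (hct : ∀ i, 0 < ct i)
    (c₀ : ℝ) (hc₀ : c₀ = max (ct 0) (max (ct 1) (ct 2)))
    (Wt : Matrix (Fin 3) (Fin 3) ℝ)
    (lam : ℝ) (hlam : lam ≠ 0)
    (g : E → E) (hg : Continuous g)
    (x x' : ℝ → E) (hx : Continuous x) (hx' : Continuous x')
    (η τ : ℝ) (hτ : 0 < τ)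
    (y y' : ℝ → E)
    (hy : ∀ t ∈ Set.Icc (η - τ / 2) (η + τ / 2),
      HasDerivAt y (respField ct Wt lam g (x t) (y t)) t)
    (hy' : ∀ t ∈ Set.Icc (η - τ / 2) (η + τ / 2),
      HasDerivAt y' (respField ct Wt lam g (x' t) (y' t)) t)
    (L ε : ℝ) (hL : 0 < L) (hε : 0 < ε)
    (hint : L * τ * ε / (2 * Real.sqrt 3) ≤
      ‖∫ s in (η - τ / 2)..(η + τ / 2), (g (x s) - g (x' s))‖) :
    ∃ t ∈ Set.Icc (η - τ / 2) (η + τ / 2),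
      L * |lam| * τ * ε / (2 * Real.sqrt 3 * (2 + (c₀ + specNorm Wt) * τ)) ≤
        ‖y t - y' t‖ := by
  set a := η - τ / 2 with ha
  set b := η + τ / 2 with hb
  have hab : a ≤ b := by rw [ha, hb]; linarith
  have hba : b - a = τ := by rw [ha, hb]; ring
  set N := specNorm Wt with hN
  have hN0 : 0 ≤ N := norm_nonneg _
  have hc₀pos : 0 < c₀ := by
    rw [hc₀]; exact lt_max_iff.2 (Or.inl (hct 0))
  have hycont : ContinuousOn y (Set.Icc a b) :=
    fun t ht => (hy t ht).continuousAt.continuousWithinAt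
  have hy'cont : ContinuousOn y' (Set.Icc a b) :=
    fun t ht => (hy' t ht).continuousAt.continuousWithinAt
  set Δ : ℝ → E := fun t => y t - y' t with hΔ
  have hΔcont : ContinuousOn Δ (Set.Icc a b) := hycont.sub hy'cont
  obtain ⟨t₀, ht₀mem, ht₀max'⟩ :=
    isCompact_Icc.exists_isMaxOn (Set.nonempty_Icc.2 hab) hΔcont.norm
  have ht₀max : ∀ s ∈ Set.Icc a b, ‖Δ s‖ ≤ ‖Δ t₀‖ := fun s hs => ht₀max' hs
  set M := ‖Δ t₀‖ with hM
  refine ⟨t₀, ht₀mem, ?_⟩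
  have hM0 : 0 ≤ M := norm_nonneg _
  set D : ℝ → E := fun t =>
    respField ct Wt lam g (x t) (y t) - respField ct Wt lam g (x' t) (y' t) with hD
  have hΔderiv : ∀ t ∈ Set.Icc a b, HasDerivAt Δ (D t) t :=
    fun t ht => (hy t ht).sub (hy' t ht)
  set G : ℝ → E := fun s => g (x s) - g (x' s) with hG
  set h : ℝ → E := fun s => D s - lam • G s with hh
  -- pointwise bound on h
  have hhb : ∀ s ∈ Set.Icc a b, ‖h s‖ ≤ (c₀ + N) * M := by
    intro s hs
    have e1 : h s = ed (fun i => -(ct i * Δ s i))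
        + Matrix.toEuclideanCLM (𝕜 := ℝ) Wt
            (ed fun i => Real.tanh (y s i) - Real.tanh (y' s i)) := by
      rw [matrix_apply_eq]
      ext i
      simp only [hh, hD, hG, hΔ, respField, PiLp.sub_apply, PiLp.add_apply, PiLp.smul_apply,
        PiLp.toLp_apply, ed_apply, smul_eq_mul, mul_sub, Finset.sum_sub_distrib]
      ring
    have b1 : ‖ed (fun i => -(ct i * Δ s i))‖ ≤ c₀ * ‖Δ s‖ := by
      have e2 : c₀ * ‖Δ s‖ = ‖c₀ • Δ s‖ := by
        rw [norm_smul, Real.norm_eq_abs, abs_of_pos hc₀pos]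
      rw [e2]
      apply enorm_mono
      intro i
      simp only [PiLp.smul_apply, ed_apply, smul_eq_mul, abs_neg, abs_mul]
      apply mul_le_mul_of_nonneg_right _ (abs_nonneg _)
      rw [abs_of_pos (hct i), abs_of_pos hc₀pos, hc₀]
      fin_cases i <;> simp [le_max_iff, le_refl]
    have b2 : ‖Matrix.toEuclideanCLM (𝕜 := ℝ) Wt
        (ed fun i => Real.tanh (y s i) - Real.tanh (y' s i))‖ ≤ N * ‖Δ s‖ := by
      have b2' := (Matrix.toEuclideanCLM (𝕜 := ℝ) Wt).le_opNorm
        (ed fun i => Real.tanh (y s i) - Real.tanh (y' s i))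
      have b2'' : ‖ed fun i => Real.tanh (y s i) - Real.tanh (y' s i)‖ ≤ ‖Δ s‖ := by
        apply enorm_mono
        intro i
        simpa only [hΔ, PiLp.sub_apply, ed_apply] using tanh_lip (y s i) (y' s i)
      exact le_trans b2' (mul_le_mul_of_nonneg_left b2'' (norm_nonneg _))
    have hΔsM : ‖Δ s‖ ≤ M := ht₀max s hs
    calc ‖h s‖ ≤ c₀ * ‖Δ s‖ + N * ‖Δ s‖ := by
          rw [e1]; exact le_trans (norm_add_le _ _) (add_le_add b1 b2)
      _ ≤ c₀ * M + N * M :=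
          add_le_add (mul_le_mul_of_nonneg_left hΔsM hc₀pos.le)
            (mul_le_mul_of_nonneg_left hΔsM hN0)
      _ = (c₀ + N) * M := by ring
  -- integrability
  have hGint : IntervalIntegrable G MeasureTheory.volume a b :=
    ((hg.comp hx).sub (hg.comp hx')).intervalIntegrable a b
  have hresp : ∀ (xx yy : ℝ → E), Continuous xx → ContinuousOn yy (Set.Icc a b) →
      ContinuousOn (fun t => respField ct Wt lam g (xx t) (yy t)) (Set.Icc a b) := by
    intro xx yy hxx hyy
    apply contOn_E
    intro i
    have hyyc : ∀ j, ContinuousOn (fun t => yy t j) (Set.Icc a b) :=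
      fun j => (EuclideanSpace.proj j : E →L[ℝ] ℝ).continuous.comp_continuousOn hyy
    show ContinuousOn (fun t =>
      -(ct i * yy t i) + (∑ j, Wt i j * Real.tanh (yy t j)) + lam * g (xx t) i) (Set.Icc a b)
    apply ContinuousOn.add
    apply ContinuousOn.add
    · exact (continuousOn_const.mul (hyyc i)).neg
    · exact continuousOn_finset_sum _ fun j _ =>
        continuousOn_const.mul (continuous_tanh'.comp_continuousOn (hyyc j))
    · exact continuousOn_const.mul
        (((EuclideanSpace.proj i : E →L[ℝ] ℝ).continuous.comp (hg.comp hxx)).continuousOn)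
  have hDcont : ContinuousOn D (Set.Icc a b) :=
    (hresp x y hx hycont).sub (hresp x' y' hx' hy'cont)
  have hDint : IntervalIntegrable D MeasureTheory.volume a b := by
    rw [← Set.uIcc_of_le hab] at hDcont
    exact hDcont.intervalIntegrable
  have hFTC : (∫ t in a..b, D t) = Δ b - Δ a := by
    apply intervalIntegral.integral_eq_sub_of_hasDerivAt
    · intro t ht
      rw [Set.uIcc_of_le hab] at ht
      exact hΔderiv t ht
    · exact hDint
  have hGsm : IntervalIntegrable (fun s => lam • G s) MeasureTheory.volume a b :=
    hGint.smul lam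
  have hhint : IntervalIntegrable h MeasureTheory.volume a b := hDint.sub hGsm
  have hsplit : lam • (∫ s in a..b, G s) = (Δ b - Δ a) - ∫ s in a..b, h s := by
    rw [← intervalIntegral.integral_smul, ← hFTC,
      ← intervalIntegral.integral_sub hDint hhint]
    apply intervalIntegral.integral_congr
    intro s _
    simp [hh]
  have hnormh : ‖∫ s in a..b, h s‖ ≤ (c₀ + N) * M * τ := by
    have key := intervalIntegral.norm_integral_le_of_norm_le_const
      (C := (c₀ + N) * M) (f := h) (a := a) (b := b) ?_
    · have habs : |b - a| = τ := by rw [abs_of_nonneg (sub_nonneg.2 hab), hba]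
      rwa [habs] at key
    · intro s hs
      rw [Set.uIoc_of_le hab] at hs
      exact hhb s (Set.Ioc_subset_Icc_self hs)
  have hΔb : ‖Δ b‖ ≤ M := ht₀max b (Set.right_mem_Icc.2 hab)
  have hΔa : ‖Δ a‖ ≤ M := ht₀max a (Set.left_mem_Icc.2 hab)
  have key : |lam| * (L * τ * ε / (2 * Real.sqrt 3)) ≤ (2 + (c₀ + N) * τ) * M := by
    calc |lam| * (L * τ * ε / (2 * Real.sqrt 3))
        ≤ |lam| * ‖∫ s in a..b, G s‖ :=
          mul_le_mul_of_nonneg_left hint (abs_nonneg lam)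
      _ = ‖lam • ∫ s in a..b, G s‖ := by rw [norm_smul, Real.norm_eq_abs]
      _ = ‖(Δ b - Δ a) - ∫ s in a..b, h s‖ := by rw [hsplit]
      _ ≤ ‖Δ b - Δ a‖ + ‖∫ s in a..b, h s‖ := norm_sub_le _ _
      _ ≤ (‖Δ b‖ + ‖Δ a‖) + ‖∫ s in a..b, h s‖ :=
          add_le_add_left (norm_sub_le _ _) _
      _ ≤ (M + M) + (c₀ + N) * M * τ :=
          add_le_add (add_le_add hΔb hΔa) hnormh
      _ = (2 + (c₀ + N) * τ) * M := by ring
  have hMy : ‖y t₀ - y' t₀‖ = M := rfl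
  rw [hMy]
  have h2S : (0:ℝ) < 2 * Real.sqrt 3 := by positivity
  have hden : 0 < 2 * Real.sqrt 3 * (2 + (c₀ + N) * τ) := by
    apply mul_pos h2S
    nlinarith
  rw [div_le_iff₀ hden]
  have key2 := mul_le_mul_of_nonneg_right key h2S.le
  rw [mul_assoc, div_mul_cancel₀ _ h2S.ne'] at key2
  calc L * |lam| * τ * ε = |lam| * (L * τ * ε) := by ring
    _ ≤ (2 + (c₀ + N) * τ) * M * (2 * Real.sqrt 3) := key2
    _ = M * (2 * Real.sqrt 3 * (2 + (c₀ + N) * τ)) := by ring
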